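/- arXiv:1503.07354 — 3 statements merged into one kernel-verified Lean document; each statement's English description precedes it below -/
import Mathlib

section
/- Let V be a finite-dimensional complex vector space with a non-degenerate symmetric complex bilinear form g. If W is a real linear subspace of V such that g restricted to W is real-valued (g(X,Y) ∈ ℝ for all X,Y ∈ W) and non-degenerate on W, then W is totally real, i.e., W ∩ iW = {0}. -/
/-- A real slice of a holomorphic inner product space is totally real. -/
theorem stmt_0 {V : Type*} [AddCommGroup V] [Module ℂ V] [Module ℝ V]
    [IsScalarTower ℝ ℂ V] [FiniteDimensional ℂ V]
    (g : LinearMap.BilinForm ℂ V)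
    (hsymm : ∀ x y : V, g x y = g y x)
    (hnd : ∀ x : V, (∀ y : V, g x y = 0) → x = 0)
    (W : Submodule ℝ V)
    (hreal : ∀ x ∈ W, ∀ y ∈ W, (g x y).im = 0)
    (hndW : ∀ x ∈ W, (∀ y ∈ W, g x y = 0) → x = 0) :
    (W : Set V) ∩ ((fun v : V => Complex.I • v) '' (W : Set V)) = {0} := by
  ext x
  simp only [Set.mem_inter_iff, Set.mem_image, Set.mem_singleton_iff, SetLike.mem_coe]
  constructor
  · rintro ⟨hx, w, hw, rfl⟩
    have hkey : ∀ z ∈ W, Complex.I • w = z → w = 0 := by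
      intro z hz hzeq
      apply hndW w hw
      intro y hy
      have h1 : (g (Complex.I • w) y).im = 0 := by
        rw [hzeq]; exact hreal z hz y hy
      have h2 : g (Complex.I • w) y = Complex.I * g w y := by
        rw [map_smul, LinearMap.smul_apply, smul_eq_mul]
      have h3 : (g w y).im = 0 := hreal w hw y hy
      have h4 : (g w y).re = 0 := by
        rw [h2] at h1
        simpa [Complex.mul_im] using h1
      exact Complex.ext h4 h3
    have := hkey _ hx rfl
    simp [this]
  · rintro rfl
    exact ⟨W.zero_mem, 0, W.zero_mem, by simp⟩
end

section
/- Let A be a complex-linear operator on a finite-dimensional complex vector space V that is symmetric with respect to a non-degenerate symmetric complex bilinear form g (i.e., g(Ax,y) = g(x,Ay) for all x,y). If V admits a basis of eigenvectors of A, then V admits a g-orthonormal basis of eigenvectors of A. -/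
/-!
Since `A` is `g`-symmetric, `μ g(x, y) = g(Ax, y) = g(x, Ay) = ν g(x, y)` for eigenvectors of
eigenvalues `μ ≠ ν`, so distinct eigenspaces are `g`-orthogonal. As the eigenspaces span `V`, the
restriction of `g` to each of them is still nondegenerate, hence has an orthonormal basis
(rescale an orthogonal basis by square roots of the diagonal). Together these bases form an
orthonormal eigenbasis.
-/

open Module

namespace Module.End

variable {K V ι : Type*} [Field K] [AddCommGroup V] [Module K V]

theorem iSup_eigenspace_eq_top_of_basis {A : End K V} (b : Basis ι K V)
    (hb : ∀ i, ∃ μ : K, A (b i) = μ • b i) : ⨆ μ, A.eigenspace μ = ⊤ := by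
  rw [eq_top_iff, ← b.span_eq, Submodule.span_le]
  rintro _ ⟨i, rfl⟩
  obtain ⟨μ, hμ⟩ := hb i
  exact Submodule.mem_iSup_of_mem μ (mem_eigenspace_iff.mpr hμ)

theorem pairwise_apply_eq_zero_of_mem_eigenspace {B : LinearMap.BilinForm K V} {A : End K V}
    (hA : ∀ x y, B (A x) y = B x (A y)) :
    Pairwise fun μ ν => ∀ x ∈ A.eigenspace μ, ∀ y ∈ A.eigenspace ν, B x y = 0 := by
  intro μ ν hμν x hx y hy
  have h : (μ - ν) * B x y = 0 := by
    have := hA x y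
    rw [mem_eigenspace_iff.mp hx, mem_eigenspace_iff.mp hy, LinearMap.map_smul₂, map_smul,
      smul_eq_mul, smul_eq_mul] at this
    rw [sub_mul, this, sub_self]
  exact (mul_eq_zero.mp h).resolve_left (sub_ne_zero.mpr hμν)

end Module.End

namespace LinearMap.BilinForm

variable {K V ι : Type*} [Field K] [AddCommGroup V] [Module K V] {B : LinearMap.BilinForm K V}

def IsOrthonormal (B : LinearMap.BilinForm K V) (v : ι → V) : Prop :=
  IsOrthoᵢ B v ∧ ∀ i, B (v i) (v i) = 1

theorem isOrthonormal_iff [DecidableEq ι] {v : ι → V} :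
    B.IsOrthonormal v ↔ ∀ i j, B (v i) (v j) = if i = j then 1 else 0 := by
  refine ⟨fun ⟨hortho, hone⟩ i j => ?_, fun h => ⟨fun i j hij => by simpa [hij] using h i j,
    fun i => by simpa using h i i⟩⟩
  split_ifs with hij
  · exact hij ▸ hone i
  · exact hortho hij

theorem IsOrthonormal.comp {ι' : Type*} {v : ι → V} (hv : B.IsOrthonormal v) {e : ι' → ι}
    (he : Function.Injective e) : B.IsOrthonormal (v ∘ e) :=
  ⟨fun _ _ hij => hv.1 (he.ne hij), fun i => hv.2 (e i)⟩

theorem _root_.LinearMap.IsOrthoᵢ.exists_isOrthonormal_unitsSMul [IsAlgClosed K]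
    {v : Basis ι K V} (hv : IsOrthoᵢ B v) (hB : B.SeparatingLeft) :
    ∃ w : ι → Kˣ, B.IsOrthonormal (v.unitsSMul w) := by
  have hdiag := hv.not_isOrtho_basis_self_of_separatingLeft hB
  choose s hs using fun i => IsAlgClosed.exists_eq_mul_self (B (v i) (v i))
  have hs0 : ∀ i, s i ≠ 0 := fun i h => hdiag i (by simp [hs i, h])
  refine ⟨fun i => (Units.mk0 (s i) (hs0 i))⁻¹, fun i j hij => ?_, fun i => ?_⟩
  · simp [Function.onFun, Basis.unitsSMul_apply, Units.smul_def, hv hij]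
  · simp [Basis.unitsSMul_apply, Units.smul_def, hs i, hs0 i]

theorem exists_basis_isOrthonormal [IsAlgClosed K] [Invertible (2 : K)] [FiniteDimensional K V]
    (hB : B.IsSymm) (hB' : B.SeparatingLeft) :
    ∃ v : Basis (Fin (finrank K V)) K V, B.IsOrthonormal v := by
  obtain ⟨v, hv⟩ := exists_orthogonal_basis (isSymm_iff.mp hB)
  obtain ⟨w, hw⟩ := hv.exists_isOrthonormal_unitsSMul hB'
  exact ⟨_, hw⟩

theorem separatingLeft_restrict_of_iSup_eq_top {W : ι → Submodule K V} (hB : B.SeparatingLeft)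
    (hW : ⨆ i, W i = ⊤) (hortho : Pairwise fun i j => ∀ x ∈ W i, ∀ y ∈ W j, B x y = 0) (i : ι) :
    (B.restrict (W i)).SeparatingLeft := by
  intro x hx
  suffices ∀ y, B x y = 0 from Subtype.ext (hB x this)
  intro y
  have hy : y ∈ ⨆ j, W j := hW ▸ Submodule.mem_top
  refine Submodule.iSup_induction W (motive := fun y => B x y = 0) hy (fun j y hy => ?_)
    (map_zero _) fun y z hy hz => ?_
  · obtain rfl | hij := eq_or_ne i j
    · exact hx ⟨y, hy⟩
    · exact hortho hij x x.2 y hy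
  · rw [map_add, hy, hz, add_zero]

theorem isOrthonormal_collectedBasis [DecidableEq ι] {W : ι → Submodule K V}
    (hW : DirectSum.IsInternal W)
    (hortho : Pairwise fun i j => ∀ x ∈ W i, ∀ y ∈ W j, B x y = 0)
    {α : ι → Type*} {v : ∀ i, Basis (α i) K (W i)}
    (hv : ∀ i, (B.restrict (W i)).IsOrthonormal (v i)) :
    B.IsOrthonormal (hW.collectedBasis v) := by
  refine ⟨fun ⟨i, a⟩ ⟨j, b⟩ hne => ?_, fun ⟨i, a⟩ => by simpa using (hv i).2 a⟩
  simp only [Function.onFun, DirectSum.IsInternal.collectedBasis_coe]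
  obtain rfl | hij := eq_or_ne i j
  · exact (hv i).1 fun hab => hne (hab ▸ rfl)
  · exact hortho hij _ (v i a).2 _ (v j b).2

theorem exists_basis_isOrthonormal_of_eigenvectors [IsAlgClosed K] [Invertible (2 : K)]
    [FiniteDimensional K V] (hB : B.IsSymm) (hB' : B.SeparatingLeft) {A : End K V}
    (hA : ∀ x y, B (A x) y = B x (A y)) (b : Basis ι K V) (hb : ∀ i, ∃ μ : K, A (b i) = μ • b i) :
    ∃ c : Basis ι K V, B.IsOrthonormal c ∧ ∀ i, ∃ μ : K, A (c i) = μ • c i := by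
  classical
  have hspan := End.iSup_eigenspace_eq_top_of_basis b hb
  have hinternal : DirectSum.IsInternal A.eigenspace :=
    DirectSum.isInternal_submodule_of_iSupIndep_of_iSup_eq_top A.eigenspaces_iSupIndep hspan
  have hortho := End.pairwise_apply_eq_zero_of_mem_eigenspace hA
  choose v hv using fun μ => exists_basis_isOrthonormal (hB.restrict (A.eigenspace μ))
    (separatingLeft_restrict_of_iSup_eq_top hB' hspan hortho μ)
  let c := hinternal.collectedBasis v
  let e := c.indexEquiv b
  refine ⟨c.reindex e, ?_, fun i => ⟨(e.symm i).1, ?_⟩⟩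
  · rw [Basis.coe_reindex]
    exact (isOrthonormal_collectedBasis hinternal hortho hv).comp e.symm.injective
  · rw [Basis.reindex_apply]
    exact End.mem_eigenspace_iff.mp (hinternal.collectedBasis_mem v _)

end LinearMap.BilinForm

/-- If a g-symmetric operator on a holomorphic inner product space admits a basis of
eigenvectors, then it admits a g-orthonormal basis of eigenvectors. -/
theorem stmt_3 {V : Type*} [AddCommGroup V] [Module ℂ V] [FiniteDimensional ℂ V]
    (g : LinearMap.BilinForm ℂ V)
    (hsymm : ∀ x y : V, g x y = g y x)
    (hnd : ∀ x : V, (∀ y : V, g x y = 0) → x = 0)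
    (A : V →ₗ[ℂ] V)
    (hA : ∀ x y : V, g (A x) y = g x (A y))
    (b : Module.Basis (Fin (Module.finrank ℂ V)) ℂ V)
    (hb : ∀ i, ∃ μ : ℂ, A (b i) = μ • b i) :
    ∃ c : Module.Basis (Fin (Module.finrank ℂ V)) ℂ V,
      (∀ i j, g (c i) (c j) = if i = j then 1 else 0) ∧
      (∀ i, ∃ μ : ℂ, A (c i) = μ • c i) := by
  obtain ⟨c, hc, hcA⟩ :=
    LinearMap.BilinForm.exists_basis_isOrthonormal_of_eigenvectors ⟨hsymm⟩ hnd hA b hb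
  exact ⟨c, LinearMap.BilinForm.isOrthonormal_iff.mp hc, hcA⟩
end

section
/- For each 0 ≤ k ≤ n, every n-dimensional holomorphic inner product space (V,g) contains a generic totally real real slice W of signature (k, n−k), and any two real slices of V of the same signature are mapped to each other by a g-orthogonal complex-linear transformation of V. -/
/-!
Diagonalise `g` in an orthogonal basis and rescale each vector by a square root (ℂ is
algebraically closed) to reach any prescribed nonzero diagonal, e.g. `(-1, …, -1, 1, …, 1)`.
The real span of a ℂ-basis is a generic totally real slice, since each complex coordinate splits
uniquely into real and imaginary parts. Conversely, `n` vectors with a nonzero diagonal Gram matrix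
are ℂ-linearly independent, hence a ℂ-basis; the ℂ-linear map matching two such bases with the same
Gram matrix preserves `g` and maps one real span onto the other.
-/

open Module

namespace LinearMap.BilinForm

variable {K M : Type*} [Field K] [AddCommGroup M] [Module K M]

theorem linearIndependent_of_gram_eq_diagonal {ι : Type*} [DecidableEq ι]
    {B : LinearMap.BilinForm K M} {v : ι → M} {d : ι → K} (hd : ∀ i, d i ≠ 0)
    (hv : ∀ i j, B (v i) (v j) = if i = j then d i else 0) :
    LinearIndependent K v :=
  linearIndependent_of_isOrthoᵢ (B := B) (fun i j hij => by simp [Function.onFun, hv, hij])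
    fun i => by simpa [hv] using hd i

theorem exists_basis_gram_eq_diagonal [IsAlgClosed K] [Invertible (2 : K)] [FiniteDimensional K M]
    {B : LinearMap.BilinForm K M} (hB : LinearMap.IsSymm B) (hB' : B.SeparatingLeft)
    (d : Fin (finrank K M) → K) (hd : ∀ i, d i ≠ 0) :
    ∃ b : Basis (Fin (finrank K M)) K M, ∀ i j, B (b i) (b j) = if i = j then d i else 0 := by
  obtain ⟨v, hv⟩ := exists_orthogonal_basis hB
  have hvv i : B (v i) (v i) ≠ 0 := hv.not_isOrtho_basis_self_of_separatingLeft hB' i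
  choose c hc using fun i => IsAlgClosed.exists_eq_mul_self (d i / B (v i) (v i))
  have hc₀ i : c i ≠ 0 := by
    rintro h
    simpa [h, hd i, hvv i] using hc i
  refine ⟨v.unitsSMul fun i => Units.mk0 (c i) (hc₀ i), fun i j => ?_⟩
  simp only [Basis.unitsSMul_apply, Units.smul_mk0, map_smul, smul_apply, smul_eq_mul]
  rcases eq_or_ne i j with rfl | hij
  · rw [if_pos rfl, ← mul_assoc, ← hc, div_mul_cancel₀ _ (hvv i)]
  · rw [hv hij, if_neg hij, mul_zero, mul_zero]

theorem exists_isometry_of_gram_eq [FiniteDimensional K M] {B : LinearMap.BilinForm K M}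
    {w₁ w₂ : Fin (finrank K M) → M} (hw₁ : LinearIndependent K w₁) (hw₂ : LinearIndependent K w₂)
    (h : ∀ i j, B (w₁ i) (w₁ j) = B (w₂ i) (w₂ j)) :
    ∃ A : M ≃ₗ[K] M, (∀ x y, B (A x) (A y) = B x y) ∧ ∀ i, A (w₁ i) = w₂ i := by
  have hcard := Fintype.card_fin (finrank K M)
  let b₁ := Basis.mk hw₁ (hw₁.span_eq_top_of_card_eq_finrank' hcard).ge
  let b₂ := Basis.mk hw₂ (hw₂.span_eq_top_of_card_eq_finrank' hcard).ge
  let A := b₁.equiv b₂ (Equiv.refl _)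
  have hA i : A (w₁ i) = w₂ i := by
    simpa [b₁, b₂] using b₁.equiv_apply i b₂ (Equiv.refl _)
  have hBA : B.compl₁₂ (A : M →ₗ[K] M) (A : M →ₗ[K] M) = B :=
    ext_basis b₁ fun i j => by simp [b₁, hA, h]
  exact ⟨A, fun x y => congr($hBA x y), hA⟩

end LinearMap.BilinForm

theorem LinearMap.image_span_range {R S M N ι : Type*} [CommSemiring R] [Semiring S] [Algebra R S]
    [AddCommMonoid M] [Module R M] [Module S M] [IsScalarTower R S M]
    [AddCommMonoid N] [Module R N] [Module S N] [IsScalarTower R S N]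
    (f : M →ₗ[S] N) (v : ι → M) :
    ⇑f '' Submodule.span R (Set.range v) = Submodule.span R (Set.range (f ∘ v)) := by
  rw [Set.range_comp]
  exact congrArg SetLike.coe (Submodule.map_span (f.restrictScalars R) (Set.range v))

section RealSlice

open Complex

variable {V ι : Type*} [AddCommGroup V] [Module ℂ V] [Fintype ι]

theorem Module.Basis.exists_eq_sum_add_I_smul_sum (b : Basis ι ℂ V) (v : V) :
    ∃ c d : ι → ℝ, v = ∑ i, (c i : ℂ) • b i + I • ∑ i, (d i : ℂ) • b i := by
  refine ⟨fun i => (b.repr v i).re, fun i => (b.repr v i).im, ?_⟩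
  conv_lhs => rw [← b.sum_repr v]
  simp only [Finset.smul_sum, smul_smul, ← Finset.sum_add_distrib, ← add_smul]
  congr! 2 with i
  rw [mul_comm, re_add_im]

variable [Module ℝ V] [IsScalarTower ℝ ℂ V]

theorem Complex.ofReal_smul_eq_smul (r : ℝ) (x : V) : (r : ℂ) • x = r • x := by
  rw [← Complex.coe_algebraMap, algebraMap_smul]

theorem LinearIndependent.eq_zero_of_mem_span_real {w : ι → V} (hw : LinearIndependent ℂ w)
    {x y : V} (hx : x ∈ Submodule.span ℝ (Set.range w)) (hy : y ∈ Submodule.span ℝ (Set.range w))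
    (hxy : x = I • y) : x = 0 := by
  obtain ⟨a, rfl⟩ := Submodule.mem_span_range_iff_exists_fun ℝ |>.mp hx
  obtain ⟨b, rfl⟩ := Submodule.mem_span_range_iff_exists_fun ℝ |>.mp hy
  simp only [← Complex.ofReal_smul_eq_smul, Finset.smul_sum, smul_smul] at hxy ⊢
  have hab := Fintype.linearIndependent_iffₛ.mp hw _ _ hxy
  have ha i : a i = 0 := by simpa using congr_arg re (hab i)
  simp [ha]

end RealSlice

theorem stmt_15_general {V : Type*} [AddCommGroup V] [Module ℂ V] [Module ℝ V]
    [IsScalarTower ℝ ℂ V] [FiniteDimensional ℂ V]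
    (g : LinearMap.BilinForm ℂ V)
    (hsymm : ∀ x y : V, g x y = g y x)
    (hnd : ∀ x : V, (∀ y : V, g x y = 0) → x = 0)
    (k : ℕ) :
    -- existence of a generic totally real real slice of signature (k, n-k)
    (∃ w : Fin (Module.finrank ℂ V) → V,
      (∀ i j, g (w i) (w j) =
        if i = j then (if (i : ℕ) < k then (-1 : ℂ) else 1) else 0) ∧
      LinearIndependent ℝ w ∧
      -- genericity : W + iW = V
      (∀ v : V, ∃ c d : Fin (Module.finrank ℂ V) → ℝ,
        v = (∑ i, (c i : ℂ) • w i) + Complex.I • ∑ i, (d i : ℂ) • w i) ∧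
      -- total reality : W ∩ iW = {0}
      (∀ x ∈ Submodule.span ℝ (Set.range w),
        (∃ y ∈ Submodule.span ℝ (Set.range w), x = Complex.I • y) → x = 0)) ∧
    -- any two real slices of the same signature are related by an element of O(n, ℂ)
    (∀ w₁ w₂ : Fin (Module.finrank ℂ V) → V,
      (∀ i j, g (w₁ i) (w₁ j) =
        if i = j then (if (i : ℕ) < k then (-1 : ℂ) else 1) else 0) →
      (∀ i j, g (w₂ i) (w₂ j) =
        if i = j then (if (i : ℕ) < k then (-1 : ℂ) else 1) else 0) →
      LinearIndependent ℝ w₁ → LinearIndependent ℝ w₂ →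
      ∃ A : V ≃ₗ[ℂ] V, (∀ x y : V, g (A x) (A y) = g x y) ∧
        (fun x => A x) '' ↑(Submodule.span ℝ (Set.range w₁)) =
          ↑(Submodule.span ℝ (Set.range w₂))) := by
  have hsign (i : Fin (finrank ℂ V)) : (if (i : ℕ) < k then (-1 : ℂ) else 1) ≠ 0 := by
    split_ifs <;> norm_num
  refine ⟨?_, fun w₁ w₂ h₁ h₂ _ _ => ?_⟩
  · obtain ⟨b, hb⟩ := LinearMap.BilinForm.exists_basis_gram_eq_diagonal
      (LinearMap.isSymm_def.mpr hsymm) hnd _ hsign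
    exact ⟨b, hb, b.linearIndependent.restrict_scalars' ℝ, b.exists_eq_sum_add_I_smul_sum,
      fun x hx ⟨y, hy, hxy⟩ => b.linearIndependent.eq_zero_of_mem_span_real hx hy hxy⟩
  · obtain ⟨A, hA, hAw⟩ := LinearMap.BilinForm.exists_isometry_of_gram_eq
      (LinearMap.BilinForm.linearIndependent_of_gram_eq_diagonal hsign h₁)
      (LinearMap.BilinForm.linearIndependent_of_gram_eq_diagonal hsign h₂)
      fun i j => by rw [h₁, h₂]
    refine ⟨A, hA, ?_⟩
    rw [show (fun x => A x) = ⇑(A : V →ₗ[ℂ] V) from rfl, LinearMap.image_span_range]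
    congr
    exact funext hAw

/-- Every `n`-dimensional holomorphic inner product space contains, for each
`0 ≤ k ≤ n`, a generic totally real real slice of signature `(k, n-k)` (given by
the real span of a g-orthogonal basis `w` with `g(wᵢ,wᵢ) = -1` for `i < k` and
`1` otherwise), and any two such real slices of the same signature are related
by a complex orthogonal transformation of `V`. -/
theorem stmt_15 {V : Type*} [AddCommGroup V] [Module ℂ V] [Module ℝ V]
    [IsScalarTower ℝ ℂ V] [FiniteDimensional ℂ V]
    (g : LinearMap.BilinForm ℂ V)
    (hsymm : ∀ x y : V, g x y = g y x)
    (hnd : ∀ x : V, (∀ y : V, g x y = 0) → x = 0)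
    (k : ℕ) (hk : k ≤ Module.finrank ℂ V) :
    -- existence of a generic totally real real slice of signature (k, n-k)
    (∃ w : Fin (Module.finrank ℂ V) → V,
      (∀ i j, g (w i) (w j) =
        if i = j then (if (i : ℕ) < k then (-1 : ℂ) else 1) else 0) ∧
      LinearIndependent ℝ w ∧
      -- genericity : W + iW = V
      (∀ v : V, ∃ c d : Fin (Module.finrank ℂ V) → ℝ,
        v = (∑ i, (c i : ℂ) • w i) + Complex.I • ∑ i, (d i : ℂ) • w i) ∧
      -- total reality : W ∩ iW = {0}
      (∀ x ∈ Submodule.span ℝ (Set.range w),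
        (∃ y ∈ Submodule.span ℝ (Set.range w), x = Complex.I • y) → x = 0)) ∧
    -- any two real slices of the same signature are related by an element of O(n, ℂ)
    (∀ w₁ w₂ : Fin (Module.finrank ℂ V) → V,
      (∀ i j, g (w₁ i) (w₁ j) =
        if i = j then (if (i : ℕ) < k then (-1 : ℂ) else 1) else 0) →
      (∀ i j, g (w₂ i) (w₂ j) =
        if i = j then (if (i : ℕ) < k then (-1 : ℂ) else 1) else 0) →
      LinearIndependent ℝ w₁ → LinearIndependent ℝ w₂ →
      ∃ A : V ≃ₗ[ℂ] V, (∀ x y : V, g (A x) (A y) = g x y) ∧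
        (fun x => A x) '' ↑(Submodule.span ℝ (Set.range w₁)) =
          ↑(Submodule.span ℝ (Set.range w₂))) :=
  stmt_15_general g hsymm hnd k
end
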